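/- Let 𝓑 be a homothecy invariant density basis of bounded open convex sets in ℝⁿ, and let E ⊆ ℝⁿ be measurable with 0 < |E| < ∞. Suppose |{x ∈ ℝⁿ : M_𝓑 χ_E(x) = 1}| > |E|. Then there exists a set A ⊆ E^c with |A| > 0 such that for every x ∈ A there is a sequence (R_{x,j})_{j≥2} of sets of 𝓑 with x ∈ R_{x,j} for all j, (1/|R_{x,j}|)∫_{R_{x,j}} χ_E > 1 − 1/j for all j ≥ 2, and lim_{j→∞} diam(R_{x,j}) = ∞. -/

import Mathlib

open MeasureTheory Set Filter
open scoped ENNReal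

/-- The geometric maximal operator associated to a collection `B` of sets. -/
noncomputable def MB {n : ℕ} (B : Set (Set (EuclideanSpace ℝ (Fin n))))
    (f : EuclideanSpace ℝ (Fin n) → ℝ≥0∞) (x : EuclideanSpace ℝ (Fin n)) : ℝ≥0∞ :=
  ⨆ (R ∈ B) (_ : x ∈ R), (∫⁻ y in R, f y) / volume R

/-- `B` is a density basis: every point lies in sets of `B` of arbitrarily
small diameter, and averages of indicators over shrinking sets of `B`
converge a.e. to the indicator. -/
def IsDensityBasis {n : ℕ} (B : Set (Set (EuclideanSpace ℝ (Fin n)))) : Prop :=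
  (∀ x : EuclideanSpace ℝ (Fin n), ∀ ε : ℝ, 0 < ε →
    ∃ R ∈ B, x ∈ R ∧ Metric.diam R < ε) ∧
  ∀ E : Set (EuclideanSpace ℝ (Fin n)), MeasurableSet E → volume E < ⊤ →
    ∀ᵐ x : EuclideanSpace ℝ (Fin n) ∂volume,
      ∀ R : ℕ → Set (EuclideanSpace ℝ (Fin n)),
        (∀ k, R k ∈ B) → (∀ k, x ∈ R k) →
        Filter.Tendsto (fun k => Metric.diam (R k)) Filter.atTop (nhds 0) →
        Filter.Tendsto (fun k => (∫⁻ y in R k, E.indicator 1 y) / volume (R k))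
          Filter.atTop (nhds (E.indicator (1 : EuclideanSpace ℝ (Fin n) → ℝ≥0∞) x))

/-!
Take for `A` the points outside `E` where `M_𝓑 χ_E = 1` and the density-basis convergence to
`χ_E` holds; it has positive measure because `{M_𝓑 χ_E = 1}` is larger than `E`.
At `x ∈ A` there are sets of `𝓑` containing `x` on which `E` has density arbitrarily close to `1`,
and they cannot all have bounded diameter. Otherwise shrink such a set `S`, on which `E` has density
`> 1 - t ^ (n + 1)`, towards `x` by the factor `t`: by convexity the image stays inside `S`, and its
measure is `t ^ n |S|`, so `E` still has density `> 1 - t` on it. Letting `t → 0` gives sets of `𝓑`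
containing `x` with diameter `O(t)` on which `E` has density `≥ 1/2`, although `χ_E(x) = 0`.
-/

open AffineMap (homothety)
open Metric (diam)

theorem ENNReal.lt_iff_lt_of_add_eq_add {a b c d : ℝ≥0∞} (hne : c + d ≠ ⊤)
    (h : a + b = c + d) : a < c ↔ d < b := by
  have hc : c ≠ ⊤ := (ENNReal.add_ne_top.1 hne).1
  have hb : b ≠ ⊤ := (ENNReal.add_ne_top.1 (h ▸ hne)).2
  constructor
  · intro hac
    by_contra! hbd
    exact (ENNReal.add_lt_add_of_lt_of_le hb hac hbd).ne h
  · intro hdb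
    by_contra! hca
    exact (ENNReal.add_lt_add_of_le_of_lt hc hca hdb).ne h.symm

theorem setLIntegral_indicator_one {α : Type*} [MeasurableSpace α] {μ : Measure α} {E : Set α}
    (hE : MeasurableSet E) (s : Set α) : ∫⁻ y in s, E.indicator 1 y ∂μ = μ (E ∩ s) := by
  rw [lintegral_indicator_one hE, Measure.restrict_apply hE]

theorem ofReal_one_sub_lt_measure_inter_div_iff {α : Type*} [MeasurableSpace α] {μ : Measure α}
    {E s : Set α} (hE : MeasurableSet E) (h0 : μ s ≠ 0) (htop : μ s ≠ ⊤) {ε : ℝ}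
    (hε0 : 0 ≤ ε) (hε1 : ε ≤ 1) :
    ENNReal.ofReal (1 - ε) < μ (E ∩ s) / μ s ↔ μ (s \ E) < ENNReal.ofReal ε * μ s := by
  rw [ENNReal.lt_div_iff_mul_lt (Or.inl h0) (Or.inl htop), inter_comm]
  refine ENNReal.lt_iff_lt_of_add_eq_add ?_ ?_
  · rwa [measure_inter_add_sdiff s hE]
  · rw [measure_inter_add_sdiff s hE, ← add_mul, ← ENNReal.ofReal_add (by linarith) hε0,
      sub_add_cancel, ENNReal.ofReal_one, one_mul]

section Homothety

variable {V : Type*} [NormedAddCommGroup V] [NormedSpace ℝ V]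

theorem dist_homothety_homothety (c : V) (r : ℝ) (p q : V) :
    dist (homothety c r p) (homothety c r q) = |r| * dist p q := by
  simp only [AffineMap.homothety_apply, vsub_eq_sub, vadd_eq_add, dist_add_right, dist_smul₀,
    dist_sub_right, Real.norm_eq_abs]

theorem diam_image_homothety_le (c : V) {r : ℝ} (hr : 0 ≤ r) {s : Set V}
    (hs : Bornology.IsBounded s) : diam (homothety c r '' s) ≤ r * diam s := by
  have hlip : LipschitzWith (Real.toNNReal r) (homothety c r) :=
    LipschitzWith.of_dist_le_mul fun p q => by
      rw [dist_homothety_homothety, Real.coe_toNNReal r hr, abs_of_nonneg hr]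
  simpa only [Real.coe_toNNReal r hr] using hlip.diam_image_le s hs

theorem Convex.image_homothety_subset {s : Set V} (hs : Convex ℝ s) {x : V} (hx : x ∈ s)
    {t : ℝ} (ht : t ∈ Icc (0 : ℝ) 1) : homothety x t '' s ⊆ s := by
  rintro _ ⟨y, hy, rfl⟩
  rw [AffineMap.homothety_eq_lineMap]
  exact hs.lineMap_mem hx hy ht

variable [MeasurableSpace V] [BorelSpace V] [FiniteDimensional ℝ V]
  (μ : Measure V) [μ.IsAddHaarMeasure]

theorem measure_image_homothety_diff_lt {E s : Set V} (hs : Convex ℝ s) {x : V} (hx : x ∈ s)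
    {t : ℝ} (ht0 : 0 < t) (ht1 : t ≤ 1)
    (h : μ (s \ E) < ENNReal.ofReal (t ^ (Module.finrank ℝ V + 1)) * μ s) :
    μ (homothety x t '' s \ E) < ENNReal.ofReal t * μ (homothety x t '' s) :=
  calc μ (homothety x t '' s \ E)
      ≤ μ (s \ E) :=
        measure_mono (sdiff_subset_sdiff_left (hs.image_homothety_subset hx ⟨ht0.le, ht1⟩))
    _ < ENNReal.ofReal (t ^ (Module.finrank ℝ V + 1)) * μ s := h
    _ = ENNReal.ofReal t * μ (homothety x t '' s) := by
      rw [Measure.addHaar_image_homothety, abs_of_pos (pow_pos ht0 _), ← mul_assoc,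
        ← ENNReal.ofReal_mul ht0.le, ← pow_succ']

theorem ofReal_one_sub_lt_measure_inter_image_homothety_div {E s : Set V} (hE : MeasurableSet E)
    (hs : Convex ℝ s) (h0 : μ s ≠ 0) (htop : μ s ≠ ⊤) {x : V} (hx : x ∈ s) {t : ℝ}
    (ht0 : 0 < t) (ht1 : t ≤ 1)
    (h : ENNReal.ofReal (1 - t ^ (Module.finrank ℝ V + 1)) < μ (E ∩ s) / μ s) :
    ENNReal.ofReal (1 - t) < μ (E ∩ homothety x t '' s) / μ (homothety x t '' s) := by
  have htd : 0 < t ^ (Module.finrank ℝ V) := pow_pos ht0 _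
  have hvol : μ (homothety x t '' s) = ENNReal.ofReal (t ^ Module.finrank ℝ V) * μ s := by
    rw [Measure.addHaar_image_homothety, abs_of_pos htd]
  rw [ofReal_one_sub_lt_measure_inter_div_iff hE h0 htop (pow_pos ht0 _).le
    (pow_le_one₀ ht0.le ht1)] at h
  rw [ofReal_one_sub_lt_measure_inter_div_iff hE
    (by simp [hvol, h0, htd]) (by simp [hvol, ENNReal.mul_ne_top, htop]) ht0.le ht1]
  exact measure_image_homothety_diff_lt μ hs hx ht0 ht1 h

end Homothety

section Basis

variable {n : ℕ}

def BasisDensityTendsto (B : Set (Set (EuclideanSpace ℝ (Fin n))))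
    (E : Set (EuclideanSpace ℝ (Fin n))) (x : EuclideanSpace ℝ (Fin n)) : Prop :=
  ∀ R : ℕ → Set (EuclideanSpace ℝ (Fin n)), (∀ k, R k ∈ B) → (∀ k, x ∈ R k) →
    Tendsto (fun k => diam (R k)) atTop (nhds 0) →
    Tendsto (fun k => (∫⁻ y in R k, E.indicator 1 y) / volume (R k)) atTop
      (nhds (E.indicator (1 : EuclideanSpace ℝ (Fin n) → ℝ≥0∞) x))

theorem IsDensityBasis.ae_basisDensityTendsto {B : Set (Set (EuclideanSpace ℝ (Fin n)))}
    (hB : IsDensityBasis B) {E : Set (EuclideanSpace ℝ (Fin n))} (hE : MeasurableSet E)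
    (hEfin : volume E < ⊤) : ∀ᵐ x, BasisDensityTendsto B E x :=
  hB.2 E hE hEfin

theorem exists_mem_lt_average_of_lt_MB {B : Set (Set (EuclideanSpace ℝ (Fin n)))}
    {f : EuclideanSpace ℝ (Fin n) → ℝ≥0∞} {x : EuclideanSpace ℝ (Fin n)} {c : ℝ≥0∞}
    (h : c < MB B f x) : ∃ R ∈ B, x ∈ R ∧ c < (∫⁻ y in R, f y) / volume R := by
  simpa only [MB, lt_iSup_iff, exists_prop] using h

theorem image_homothety_mem {B : Set (Set (EuclideanSpace ℝ (Fin n)))}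
    (hhom : ∀ R ∈ B, ∀ (a : EuclideanSpace ℝ (Fin n)) (t : ℝ), 0 < t →
      (fun x => a + t • x) '' R ∈ B)
    {R : Set (EuclideanSpace ℝ (Fin n))} (hR : R ∈ B) (x : EuclideanSpace ℝ (Fin n)) {t : ℝ}
    (ht : 0 < t) : homothety x t '' R ∈ B := by
  convert hhom R hR (x - t • x) t ht using 2
  simp only [AffineMap.homothety_apply, vsub_eq_sub, vadd_eq_add, smul_sub]
  abel

theorem exists_mem_lt_average_lt_diam {B : Set (Set (EuclideanSpace ℝ (Fin n)))}
    (hB : ∀ R ∈ B, IsOpen R ∧ Bornology.IsBounded R ∧ Convex ℝ R)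
    (hhom : ∀ R ∈ B, ∀ (a : EuclideanSpace ℝ (Fin n)) (t : ℝ), 0 < t →
      (fun x => a + t • x) '' R ∈ B)
    {E : Set (EuclideanSpace ℝ (Fin n))} (hE : MeasurableSet E) {x : EuclideanSpace ℝ (Fin n)}
    (hxE : x ∉ E) (hx : BasisDensityTendsto B E x) (hMB : MB B (E.indicator 1) x = 1)
    {c : ℝ≥0∞} (hc : c < 1) (M : ℝ) :
    ∃ R ∈ B, x ∈ R ∧ c < (∫⁻ y in R, E.indicator 1 y) / volume R ∧ M < diam R := by
  by_contra! hsmall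
  set t : ℕ → ℝ := fun k => 1 / ((k : ℝ) + 2)
  have ht0 (k : ℕ) : 0 < t k := by positivity
  have ht1 (k : ℕ) : t k ≤ 1 / 2 := one_div_le_one_div_of_le two_pos (by simp)
  have hpick (k : ℕ) : ∃ S ∈ B, x ∈ S ∧ max c (ENNReal.ofReal (1 - t k ^ (n + 1))) <
      (∫⁻ y in S, E.indicator 1 y) / volume S := by
    refine exists_mem_lt_average_of_lt_MB (hMB ▸ max_lt hc (ENNReal.ofReal_lt_one.2 ?_))
    linarith [pow_pos (ht0 k) (n + 1)]
  choose S hSB hxS hSavg using hpick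
  have hdiam (k : ℕ) : diam (homothety x (t k) '' S k) ≤ t k * M :=
    (diam_image_homothety_le x (ht0 k).le (hB _ (hSB k)).2.1).trans <|
      mul_le_mul_of_nonneg_left (hsmall _ (hSB k) (hxS k) ((le_max_left _ _).trans_lt (hSavg k)))
        (ht0 k).le
  have ht : Tendsto t atTop (nhds 0) :=
    tendsto_const_nhds.div_atTop (tendsto_atTop_add_const_right _ 2 tendsto_natCast_atTop_atTop)
  have hlim := hx (fun k => homothety x (t k) '' S k)
    (fun k => image_homothety_mem hhom (hSB k) x (ht0 k))
    (fun k => ⟨x, hxS k, AffineMap.homothety_apply_same x (t k)⟩)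
    (squeeze_zero (fun _ => Metric.diam_nonneg) hdiam (by simpa using ht.mul_const M))
  rw [indicator_of_notMem hxE] at hlim
  obtain ⟨k, hk⟩ := (hlim.eventually_lt_const (ENNReal.ofReal_pos.2 one_half_pos)).exists
  have hS := hB _ (hSB k)
  have hshrunk := ofReal_one_sub_lt_measure_inter_image_homothety_div volume hE hS.2.2
    (hS.1.measure_pos volume ⟨x, hxS k⟩).ne' hS.2.1.measure_lt_top.ne (hxS k) (ht0 k)
    ((ht1 k).trans one_half_lt_one.le)
    (by simpa [setLIntegral_indicator_one hE] using (le_max_right _ _).trans_lt (hSavg k))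
  rw [← setLIntegral_indicator_one hE] at hshrunk
  exact (hk.trans (lt_of_le_of_lt (ENNReal.ofReal_le_ofReal (by linarith [ht1 k])) hshrunk)).false

theorem exists_seq_lt_average_tendsto_diam {B : Set (Set (EuclideanSpace ℝ (Fin n)))}
    {f : EuclideanSpace ℝ (Fin n) → ℝ≥0∞} {x : EuclideanSpace ℝ (Fin n)}
    (h : ∀ c < 1, ∀ M : ℝ, ∃ R ∈ B, x ∈ R ∧ c < (∫⁻ y in R, f y) / volume R ∧ M < diam R) :
    ∃ R : ℕ → Set (EuclideanSpace ℝ (Fin n)), (∀ j, R j ∈ B ∧ x ∈ R j) ∧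
      (∀ j : ℕ, 0 < j →
        ENNReal.ofReal (1 - 1 / (j : ℝ)) < (∫⁻ y in R j, f y) / volume (R j)) ∧
      Tendsto (fun j => diam (R j)) atTop atTop := by
  have hc (j : ℕ) : ENNReal.ofReal (1 - 1 / ((j : ℝ) + 1)) < 1 :=
    ENNReal.ofReal_lt_one.2 (by simp only [sub_lt_self_iff]; positivity)
  choose R hRB hxR hRavg hRdiam using fun j : ℕ => h _ (hc j) j
  refine ⟨R, fun j => ⟨hRB j, hxR j⟩, fun j hj => ?_,
    tendsto_atTop_mono (fun j => (hRdiam j).le) tendsto_natCast_atTop_atTop⟩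
  refine lt_of_le_of_lt (ENNReal.ofReal_le_ofReal ?_) (hRavg j)
  have : 1 / ((j : ℝ) + 1) ≤ 1 / j := one_div_le_one_div_of_le (by exact_mod_cast hj) (by simp)
  linarith

end Basis

theorem halo_excess_gives_large_sets_general (n : ℕ)
    (B : Set (Set (EuclideanSpace ℝ (Fin n))))
    (hB : ∀ R ∈ B, IsOpen R ∧ Bornology.IsBounded R ∧ Convex ℝ R)
    (hhom : ∀ R ∈ B, ∀ (a : EuclideanSpace ℝ (Fin n)) (t : ℝ), 0 < t →
      (fun x => a + t • x) '' R ∈ B)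
    (hdens : IsDensityBasis B)
    (E : Set (EuclideanSpace ℝ (Fin n))) (hE : MeasurableSet E)
    (hEfin : volume E < ⊤)
    (hbig : volume {x : EuclideanSpace ℝ (Fin n) | MB B (E.indicator 1) x = 1}
      > volume E) :
    ∃ A : Set (EuclideanSpace ℝ (Fin n)), A ⊆ Eᶜ ∧ 0 < volume A ∧
      ∀ x ∈ A, ∃ R : ℕ → Set (EuclideanSpace ℝ (Fin n)),
        (∀ j, R j ∈ B ∧ x ∈ R j) ∧
        (∀ j : ℕ, 2 ≤ j →
          (∫⁻ y in R j, E.indicator 1 y) / volume (R j)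
            > ENNReal.ofReal (1 - 1 / (j : ℝ))) ∧
        Filter.Tendsto (fun j => Metric.diam (R j)) Filter.atTop Filter.atTop := by
  refine ⟨({x | MB B (E.indicator 1) x = 1} \ E) ∩ {x | BasisDensityTendsto B E x},
    fun x hx => hx.1.2, ?_, ?_⟩
  · rw [measure_inter_conull (hdens.ae_basisDensityTendsto hE hEfin)]
    exact (tsub_pos_of_lt hbig).trans_le le_measure_sdiff
  · rintro x ⟨⟨hMB, hxE⟩, hx⟩
    obtain ⟨R, hR, havg, hdiam⟩ := exists_seq_lt_average_tendsto_diam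
      fun c hc M => exists_mem_lt_average_lt_diam hB hhom hE hxE hx hMB hc M
    exact ⟨R, hR, fun j hj => havg j (by omega), hdiam⟩

theorem halo_excess_gives_large_sets (n : ℕ)
    (B : Set (Set (EuclideanSpace ℝ (Fin n))))
    (hB : ∀ R ∈ B, IsOpen R ∧ Bornology.IsBounded R ∧ Convex ℝ R)
    (hhom : ∀ R ∈ B, ∀ (a : EuclideanSpace ℝ (Fin n)) (t : ℝ), 0 < t →
      (fun x => a + t • x) '' R ∈ B)
    (hdens : IsDensityBasis B)
    (E : Set (EuclideanSpace ℝ (Fin n))) (hE : MeasurableSet E)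
    (hE0 : 0 < volume E) (hEfin : volume E < ⊤)
    (hbig : volume {x : EuclideanSpace ℝ (Fin n) | MB B (E.indicator 1) x = 1}
      > volume E) :
    ∃ A : Set (EuclideanSpace ℝ (Fin n)), A ⊆ Eᶜ ∧ 0 < volume A ∧
      ∀ x ∈ A, ∃ R : ℕ → Set (EuclideanSpace ℝ (Fin n)),
        (∀ j, R j ∈ B ∧ x ∈ R j) ∧
        (∀ j : ℕ, 2 ≤ j →
          (∫⁻ y in R j, E.indicator 1 y) / volume (R j)
            > ENNReal.ofReal (1 - 1 / (j : ℝ))) ∧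
        Filter.Tendsto (fun j => Metric.diam (R j)) Filter.atTop Filter.atTop :=
  halo_excess_gives_large_sets_general n B hB hhom hdens E hE hEfin hbig
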